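/- arXiv:1109.1736 — 6 statements merged into one kernel-verified Lean document; each statement's English description precedes it below -/
import Mathlib

section
/- A compact Hausdorff space X has a small diagonal if and only if every ω₁-indexed sequence ⟨(x_α, y_α) : α < ω₁⟩ of pairs of points of X with x_α ≠ y_α for all α is ω₁-separated, i.e., there is an uncountable set A ⊆ ω₁ such that the closures of {x_α : α ∈ A} and {y_α : α ∈ A} are disjoint. -/
open Cardinal Set

/-- ω₁ as a (well-ordered) type. -/
noncomputable abbrev ω₁ : Type := (Cardinal.aleph 1).ord.ToType

/-- A topological space has a small diagonal if every uncountable subset of `X × X`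
disjoint from the diagonal has an uncountable subset whose closure is disjoint
from the diagonal. -/
def HasSmallDiagonal (X : Type*) [TopologicalSpace X] : Prop :=
  ∀ S : Set (X × X), ¬ S.Countable → (∀ p ∈ S, p.1 ≠ p.2) →
    ∃ T ⊆ S, ¬ T.Countable ∧ ∀ p ∈ closure T, p.1 ≠ p.2

/-!
If the small diagonal is given, the pairs `(x α, y α)` contain uncountably many whose closure
misses the diagonal (when there are only countably many distinct pairs, uncountably many equal
ones suffice). By compactness these have a condensation point `(p, q)` with `p ≠ q`; a rectangle
`U ×ˢ V` around it with `closure U` and `closure V` disjoint then contains uncountably many of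
the pairs. Conversely, an uncountable set `S` off the diagonal contains an `ω₁`-sequence of
pairs, and the closure of an `ω₁`-separated subfamily lies in a product of two disjoint closed
sets.
-/

open Filter Topology

instance : Uncountable ω₁ :=
  aleph0_lt_mk_iff.1 <| by rw [mk_ord_toType]; exact aleph0_lt_aleph_one

theorem nonempty_omega1_embedding_of_not_countable {α : Type*} {S : Set α} (hS : ¬ S.Countable) :
    Nonempty (ω₁ ↪ S) := by
  rw [← lift_mk_le', mk_ord_toType, lift_aleph, Ordinal.lift_one, aleph_one_le_iff,
    aleph0_lt_lift, ← not_le, le_aleph0_iff_set_countable]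
  exact hS

theorem exists_not_countable_preimage_singleton {ι β : Type*} [Uncountable ι] {f : ι → β}
    (hf : (range f).Countable) : ∃ b, ¬ (f ⁻¹' {b}).Countable := by
  by_contra! h
  refine not_countable_univ (α := ι) ?_
  rw [← preimage_range, ← biUnion_preimage_singleton]
  exact hf.biUnion fun b _ => h b

theorem exists_mem_closure_image_forall_nhds_not_countable {ι Y : Type*} [TopologicalSpace Y]
    [CompactSpace Y] (f : ι → Y) {A : Set ι} (hA : ¬ A.Countable) :
    ∃ p ∈ closure (f '' A), ∀ N ∈ 𝓝 p, ¬ (A ∩ f ⁻¹' N).Countable := by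
  -- `p` is a cluster point of the image of the cocountable filter on `A`
  have : (cocountable ⊓ 𝓟 A).NeBot := cocardinal_inf_principal_neBot_iff.2 <| by
    rwa [aleph_one_le_iff, ← not_le, le_aleph0_iff_set_countable]
  obtain ⟨p, hp⟩ := exists_clusterPt_of_compactSpace (map f (cocountable ⊓ 𝓟 A))
  refine ⟨p, mem_closure_iff_clusterPt.2 <| hp.mono ?_, fun N hN hc => ?_⟩
  · rw [← map_principal]
    exact map_mono inf_le_right
  · have hNc : f ⁻¹' Nᶜ ∈ cocountable ⊓ 𝓟 A :=
      mem_inf_of_inter ((mem_cocountable (s := (A ∩ f ⁻¹' N)ᶜ)).2 (by rwa [compl_compl]))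
        (mem_principal_self A) fun i hi hiN => hi.1 ⟨hi.2, hiN⟩
    obtain ⟨q, hqN, hqNc⟩ := clusterPt_iff_nonempty.1 hp hN hNc
    exact hqNc hqN

section

variable {X : Type*} [TopologicalSpace X]

theorem HasSmallDiagonal.exists_not_countable_forall_mem_closure_image_ne [T1Space X]
    (hX : HasSmallDiagonal X) {ι : Type*} [Uncountable ι] (f : ι → X × X)
    (hf : ∀ i, (f i).1 ≠ (f i).2) :
    ∃ A : Set ι, ¬ A.Countable ∧ ∀ p ∈ closure (f '' A), p.1 ≠ p.2 := by
  by_cases hr : (range f).Countable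
  · -- a single off-diagonal point is closed, so an uncountable fiber of `f` will do
    obtain ⟨p, hp⟩ := exists_not_countable_preimage_singleton hr
    obtain ⟨i, rfl⟩ : p ∈ range f := by
      by_contra h
      rw [preimage_singleton_eq_empty.2 h] at hp
      exact hp countable_empty
    refine ⟨f ⁻¹' {f i}, hp, fun q hq => ?_⟩
    rw [image_preimage_eq_of_subset (singleton_subset_iff.2 (mem_range_self i)),
      closure_singleton, mem_singleton_iff] at hq
    exact hq ▸ hf i
  · obtain ⟨T, hTf, hT, hTd⟩ := hX _ hr (forall_mem_range.2 hf)
    refine ⟨f ⁻¹' T, fun hc => hT ?_, by rwa [image_preimage_eq_of_subset hTf]⟩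
    simpa only [image_preimage_eq_of_subset hTf] using hc.image f

theorem exists_not_countable_disjoint_closure_image [CompactSpace X] [T25Space X]
    {ι : Type*} (x y : ι → X) {A : Set ι} (hA : ¬ A.Countable)
    (hd : ∀ p ∈ closure ((fun i => (x i, y i)) '' A), p.1 ≠ p.2) :
    ∃ B : Set ι, ¬ B.Countable ∧ Disjoint (closure (x '' B)) (closure (y '' B)) := by
  obtain ⟨p, hpA, hp⟩ :=
    exists_mem_closure_image_forall_nhds_not_countable (fun i => (x i, y i)) hA
  obtain ⟨U, hU, V, hV, hUV⟩ := exists_nhds_disjoint_closure (hd p hpA)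
  refine ⟨_, hp _ (prod_mem_nhds hU hV), hUV.mono ?_ ?_⟩
  · exact closure_mono (image_subset_iff.2 fun i hi => hi.2.1)
  · exact closure_mono (image_subset_iff.2 fun i hi => hi.2.2)

theorem fst_ne_snd_of_mem_closure_image {ι : Type*} (x y : ι → X) {A : Set ι}
    (h : Disjoint (closure (x '' A)) (closure (y '' A))) :
    ∀ p ∈ closure ((fun i => (x i, y i)) '' A), p.1 ≠ p.2 := by
  intro p hp hpd
  have hsub : (fun i => (x i, y i)) '' A ⊆ (x '' A) ×ˢ (y '' A) :=
    image_subset_iff.2 fun i hi => ⟨mem_image_of_mem x hi, mem_image_of_mem y hi⟩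
  obtain ⟨hpx, hpy⟩ : p ∈ closure (x '' A) ×ˢ closure (y '' A) :=
    closure_prod_eq (s := x '' A) (t := y '' A) ▸ closure_mono hsub hp
  exact disjoint_left.1 h hpx (hpd ▸ hpy)

end

theorem smallDiagonal_iff_omega1_separated (X : Type*) [TopologicalSpace X]
    [CompactSpace X] [T2Space X] :
    HasSmallDiagonal X ↔
      ∀ x y : ω₁ → X, (∀ α, x α ≠ y α) →
        ∃ A : Set ω₁, ¬ A.Countable ∧
          Disjoint (closure (x '' A)) (closure (y '' A)) := by
  constructor
  · intro hX x y hxy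
    obtain ⟨A, hA, hd⟩ :=
      hX.exists_not_countable_forall_mem_closure_image_ne (fun α => (x α, y α)) hxy
    exact exists_not_countable_disjoint_closure_image x y hA hd
  · intro h S hS hSd
    obtain ⟨g⟩ := nonempty_omega1_embedding_of_not_countable hS
    obtain ⟨A, hA, hdisj⟩ :=
      h (fun α => (g α).1.1) (fun α => (g α).1.2) fun α => hSd _ (g α).2
    refine ⟨(fun α => (g α : X × X)) '' A, image_subset_iff.2 fun α _ => (g α).2,
      fun hc => hA ?_, fst_ne_snd_of_mem_closure_image _ _ hdisj⟩
    exact countable_of_injective_of_countable_image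
      (Subtype.val_injective.comp g.injective).injOn hc
end

section
/- If f : X → Y is an irreducible continuous surjection between compact Hausdorff spaces, then X and Y have the same π-weight. -/
/-! An irreducible closed surjection `f : X → Y` lets π-bases travel in both directions.
A π-base of `Y` pulls back along `f⁻¹'`; conversely, the small image
`kernImage f U = (f '' Uᶜ)ᶜ` of a nonempty open `U ⊆ X` is open because `f` is closed and
nonempty because `f` is irreducible, so it pushes a π-base of `X` to one of `Y`. -/

open Set Cardinal

universe u

/-- `B` is a π-base: a family of nonempty open sets such that every nonempty open
set contains a member of the family. -/
def IsPiBase {X : Type u} [TopologicalSpace X] (B : Set (Set X)) : Prop :=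
  (∀ b ∈ B, IsOpen b ∧ b.Nonempty) ∧
  ∀ U : Set X, IsOpen U → U.Nonempty → ∃ b ∈ B, b ⊆ U

/-- The π-weight of a topological space: the least cardinality of a π-base. -/
noncomputable def piWeight (X : Type u) [TopologicalSpace X] : Cardinal.{u} :=
  sInf {c : Cardinal.{u} | ∃ B : Set (Set X), IsPiBase B ∧ #B = c}

lemma isPiBase_setOf_isOpen_nonempty {X : Type u} [TopologicalSpace X] :
    IsPiBase {U : Set X | IsOpen U ∧ U.Nonempty} :=
  ⟨fun _ hb => hb, fun U hU hUne => ⟨U, ⟨hU, hUne⟩, subset_rfl⟩⟩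

lemma IsPiBase.piWeight_le {X : Type u} [TopologicalSpace X] {B : Set (Set X)}
    (hB : IsPiBase B) : piWeight X ≤ #B :=
  csInf_le' ⟨B, hB, rfl⟩

lemma piWeight_le_of_image {X Y : Type u} [TopologicalSpace X] [TopologicalSpace Y]
    (g : Set Y → Set X) (hg : ∀ B, IsPiBase B → IsPiBase (g '' B)) :
    piWeight X ≤ piWeight Y :=
  le_csInf ⟨_, _, isPiBase_setOf_isOpen_nonempty, rfl⟩ fun _ ⟨B, hB, hc⟩ =>
    hc ▸ (hg B hB).piWeight_le.trans mk_image_le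

lemma kernImage_nonempty_of_irreducible {X Y : Type u} [TopologicalSpace X] {f : X → Y}
    (hirr : ∀ C : Set X, IsClosed C → C ≠ Set.univ → f '' C ≠ Set.univ)
    {U : Set X} (hU : IsOpen U) (hUne : U.Nonempty) : (kernImage f U).Nonempty := by
  rw [kernImage_eq_compl, nonempty_compl]
  exact hirr _ hU.isClosed_compl (compl_ne_univ.2 hUne)

section Irreducible

variable {X Y : Type u} [TopologicalSpace X] [TopologicalSpace Y] {f : X → Y}
  (hf : Continuous f) (hclosed : IsClosedMap f) (hsurj : Function.Surjective f)
  (hirr : ∀ C : Set X, IsClosed C → C ≠ Set.univ → f '' C ≠ Set.univ)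
include hf hclosed hsurj hirr

lemma IsPiBase.preimage {B : Set (Set Y)} (hB : IsPiBase B) : IsPiBase ((f ⁻¹' ·) '' B) := by
  refine ⟨?_, fun U hU hUne => ?_⟩
  · rintro _ ⟨b, hb, rfl⟩
    exact ⟨(hB.1 b hb).1.preimage hf, (hB.1 b hb).2.preimage hsurj⟩
  · obtain ⟨b, hb, hbU⟩ := hB.2 _ (isClosedMap_iff_kernImage.1 hclosed hU)
      (kernImage_nonempty_of_irreducible hirr hU hUne)
    exact ⟨f ⁻¹' b, mem_image_of_mem _ hb, subset_kernImage_iff.1 hbU⟩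

lemma IsPiBase.image_kernImage {B : Set (Set X)} (hB : IsPiBase B) :
    IsPiBase (kernImage f '' B) := by
  refine ⟨?_, fun V hV hVne => ?_⟩
  · rintro _ ⟨b, hb, rfl⟩
    exact ⟨isClosedMap_iff_kernImage.1 hclosed (hB.1 b hb).1,
      kernImage_nonempty_of_irreducible hirr (hB.1 b hb).1 (hB.1 b hb).2⟩
  · obtain ⟨b, hb, hbV⟩ := hB.2 _ (hV.preimage hf) (hVne.preimage hsurj)
    refine ⟨kernImage f b, mem_image_of_mem _ hb, ?_⟩
    calc kernImage f b ⊆ kernImage f (f ⁻¹' V) := kernImage_mono hbV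
      _ = V := kernImage_preimage_eq_iff.2 (by simp [hsurj.range_eq])

end Irreducible

theorem irreducible_piWeight_eq_general {X Y : Type u} [TopologicalSpace X]
    [TopologicalSpace Y] [CompactSpace X] [T2Space Y]
    (f : X → Y) (hf : Continuous f) (hsurj : Function.Surjective f)
    (hirr : ∀ C : Set X, IsClosed C → C ≠ Set.univ → f '' C ≠ Set.univ) :
    piWeight X = piWeight Y :=
  le_antisymm
    (piWeight_le_of_image _ fun _ hB => hB.preimage hf hf.isClosedMap hsurj hirr)
    (piWeight_le_of_image _ fun _ hB => hB.image_kernImage hf hf.isClosedMap hsurj hirr)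

theorem irreducible_piWeight_eq {X Y : Type u} [TopologicalSpace X]
    [TopologicalSpace Y] [CompactSpace X] [T2Space X] [CompactSpace Y] [T2Space Y]
    (f : X → Y) (hf : Continuous f) (hsurj : Function.Surjective f)
    (hirr : ∀ C : Set X, IsClosed C → C ≠ Set.univ → f '' C ≠ Set.univ) :
    piWeight X = piWeight Y :=
  irreducible_piWeight_eq_general f hf hsurj hirr
end

section
/- If X is a compact Hausdorff space in which some uncountable set A has a metrizable set of condensation points, and X has a small diagonal, then there is a co-countable subset B of A whose closure in X is metrizable. -/
open Set

/-!
Let `K` be the set of condensation points of `A`. As a compact metrizable subset of the normal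
space `X`, `K` admits a continuous map `F : X → ℕ → ℝ` that is injective on `K` (embed `K` in
`ℓ^∞` and extend the coordinates by Tietze). Since `F '' K` is a closed `G_δ`, all but countably
many points `c ∈ A \ K` have a partner `k ∈ K` with `F c = F k`, and these pairs form a set
`S ⊆ X × X` off the diagonal. If `A \ K` were uncountable, the small diagonal would give an
uncountable `T ⊆ S` with closure off the diagonal; a condensation point `(P, Q)` of `T` has both
coordinates in `K` and `F P = F Q`, hence lies on the diagonal. So `B = A ∩ K` works, and its
closure lies in `K`.
-/

section

variable {X : Type*} [TopologicalSpace X]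

def condensationPoints (A : Set X) : Set X :=
  {x | ∀ U : Set X, IsOpen U → x ∈ U → ¬ (U ∩ A).Countable}

theorem isClosed_condensationPoints (A : Set X) : IsClosed (condensationPoints A) := by
  refine isOpen_compl_iff.mp (isOpen_iff_forall_mem_open.mpr fun x hx => ?_)
  simp only [condensationPoints, mem_compl_iff, mem_ofPred_eq, not_forall, not_not] at hx
  obtain ⟨U, hU, hxU, hUA⟩ := hx
  exact ⟨U, fun y hy hyK => hyK U hU hy hUA, hU, hxU⟩

theorem condensationPoints_mono {A B : Set X} (h : A ⊆ B) :
    condensationPoints A ⊆ condensationPoints B :=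
  fun _ hx U hU hxU hUB => hx U hU hxU (hUB.mono (inter_subset_inter_right U h))

theorem condensationPoints_subset_closure (A : Set X) : condensationPoints A ⊆ closure A :=
  fun _ hx => mem_closure_iff.mpr fun U hU hxU =>
    nonempty_iff_ne_empty.mpr fun h => hx U hU hxU (h ▸ countable_empty)

theorem Set.InjOn.image_condensationPoints_subset {Y : Type*} [TopologicalSpace Y] {f : X → Y}
    {A : Set X} (hinj : InjOn f A) (hf : Continuous f) :
    f '' condensationPoints A ⊆ condensationPoints (f '' A) := by
  rintro _ ⟨x, hx, rfl⟩ U hU hxU hUA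
  refine hx (f ⁻¹' U) (hU.preimage hf) hxU ?_
  refine (mapsTo_image f _).countable_of_injOn (hinj.mono inter_subset_right) (hUA.mono ?_)
  exact image_subset_iff.mpr fun y hy => ⟨hy.1, mem_image_of_mem f hy.2⟩

theorem nonempty_condensationPoints [CompactSpace X] {A : Set X} (hA : ¬ A.Countable) :
    (condensationPoints A).Nonempty := by
  by_contra h
  simp only [not_nonempty_iff_eq_empty, eq_empty_iff_forall_notMem, condensationPoints,
    mem_ofPred_eq, not_forall, not_not] at h
  choose U hU hxU hUA using h
  obtain ⟨t, ht⟩ := isCompact_univ.elim_finite_subcover U hU fun x _ => mem_iUnion.mpr ⟨x, hxU x⟩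
  refine hA ((t.countable_toSet.biUnion fun x _ => hUA x).mono fun a ha => ?_)
  obtain ⟨x, hx, hax⟩ := mem_iUnion₂.mp (ht (mem_univ a))
  exact mem_iUnion₂.mpr ⟨x, hx, hax, ha⟩

theorem IsOpen.countable_diff_of_condensationPoints_subset [CompactSpace X] {A O : Set X}
    (hO : IsOpen O) (h : condensationPoints A ⊆ O) : (A \ O).Countable := by
  by_contra hAO
  obtain ⟨x, hx⟩ := nonempty_condensationPoints hAO
  refine hx O hO (h (condensationPoints_mono sdiff_subset hx)) ?_
  rw [inter_sdiff_self]
  exact countable_empty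

theorem IsGδ.countable_diff_of_condensationPoints_subset [CompactSpace X] {A G : Set X}
    (hG : IsGδ G) (h : condensationPoints A ⊆ G) : (A \ G).Countable := by
  obtain ⟨𝒰, h𝒰o, h𝒰c, rfl⟩ := hG
  have := h𝒰c.to_subtype
  rw [sInter_eq_iInter, sdiff_iInter]
  exact countable_iUnion fun U => (h𝒰o U U.2).countable_diff_of_condensationPoints_subset
    (h.trans (sInter_subset_of_mem U.2))

theorem HasSmallDiagonal.countable_diff_condensationPoints [CompactSpace X]
    (hX : HasSmallDiagonal X) {Y : Type*} [TopologicalSpace Y] [T2Space Y]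
    [PerfectlyNormalSpace Y] {A : Set X} {F : X → Y} (hF : Continuous F)
    (hinj : InjOn F (condensationPoints A)) : (A \ condensationPoints A).Countable := by
  set K := condensationPoints A
  have hKc : IsClosed K := isClosed_condensationPoints A
  set C := (A \ K) ∩ F ⁻¹' (F '' K)
  have hG : IsGδ (F ⁻¹' (F '' K)) := ((hKc.isCompact.image hF).isClosed.isGδ).preimage hF
  have hAG : (A \ F ⁻¹' (F '' K)).Countable :=
    hG.countable_diff_of_condensationPoints_subset fun x hx => ⟨x, hx, rfl⟩
  suffices hC : C.Countable by
    refine (hC.union hAG).mono fun x hx => ?_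
    by_cases hxG : x ∈ F ⁻¹' (F '' K)
    exacts [Or.inl ⟨hx, hxG⟩, Or.inr ⟨hx.1, hxG⟩]
  by_contra hC
  set S : Set (X × X) := {p | p.1 ∈ C ∧ p.2 ∈ K ∧ F p.1 = F p.2}
  have hSinj : InjOn Prod.fst S := fun p hp q hq hpq =>
    Prod.ext hpq (hinj hp.2.1 hq.2.1 (hp.2.2.symm.trans ((congrArg F hpq).trans hq.2.2)))
  have hS : ¬ S.Countable := fun h => hC <| (h.image Prod.fst).mono fun c hc => by
    obtain ⟨k, hk, hkc⟩ := hc.2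
    exact ⟨(c, k), ⟨hc, hk, hkc.symm⟩, rfl⟩
  obtain ⟨T, hTS, hT, hTdiag⟩ := hX S hS fun p hp h => hp.1.1.2 (h ▸ hp.2.1)
  obtain ⟨⟨P, Q⟩, hPQ⟩ := nonempty_condensationPoints hT
  have hPQT : (P, Q) ∈ closure T := condensationPoints_subset_closure T hPQ
  have hP : P ∈ K := condensationPoints_mono (image_subset_iff.mpr fun p hp => (hTS hp).1.1.1)
    ((hSinj.mono hTS).image_condensationPoints_subset continuous_fst ⟨_, hPQ, rfl⟩)
  have hQ : Q ∈ K := hKc.closure_subset_iff.mpr (image_subset_iff.mpr fun p hp => (hTS hp).2.1)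
    (map_mem_closure continuous_snd hPQT fun p hp => mem_image_of_mem Prod.snd hp)
  have hFPQ : F P = F Q :=
    closure_minimal (fun p hp => (hTS hp).2.2)
      (isClosed_eq (hF.comp continuous_fst) (hF.comp continuous_snd)) hPQT
  exact hTdiag _ hPQT (hinj hP hQ hFPQ)

theorem IsClosed.exists_continuous_injOn [NormalSpace X] {K : Set X} (hK : IsClosed K)
    [T3Space K] [SecondCountableTopology K] :
    ∃ F : X → ℕ → ℝ, Continuous F ∧ InjOn F K := by
  obtain ⟨f, hf⟩ := TopologicalSpace.exists_embedding_l_infty K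
  obtain ⟨g, hg⟩ := ContinuousMap.exists_restrict_eq hK
    ⟨fun k => ⇑(f k), BoundedContinuousFunction.continuous_coe.comp hf.continuous⟩
  refine ⟨g, g.continuous, fun x hx y hy hxy => ?_⟩
  have hfxy : (f ⟨x, hx⟩ : ℕ → ℝ) = f ⟨y, hy⟩ :=
    (DFunLike.congr_fun hg ⟨x, hx⟩).symm.trans (hxy.trans (DFunLike.congr_fun hg ⟨y, hy⟩))
  exact congrArg Subtype.val (hf.injective (DFunLike.coe_injective hfxy))

end

theorem cocountable_subset_with_metrizable_closure_general {X : Type*} [TopologicalSpace X]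
    [CompactSpace X] [T2Space X] (hX : HasSmallDiagonal X)
    (A : Set X)
    (hK : TopologicalSpace.MetrizableSpace
      {x : X // ∀ U : Set X, IsOpen U → x ∈ U → ¬ (U ∩ A).Countable}) :
    ∃ B ⊆ A, (A \ B).Countable ∧
      TopologicalSpace.MetrizableSpace (closure B) := by
  have : TopologicalSpace.MetrizableSpace (condensationPoints A) := hK
  have hKc : IsClosed (condensationPoints A) := isClosed_condensationPoints A
  have : CompactSpace (condensationPoints A) := isCompact_iff_compactSpace.mp hKc.isCompact
  obtain ⟨F, hF, hinj⟩ := hKc.exists_continuous_injOn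
  refine ⟨A ∩ condensationPoints A, inter_subset_left, ?_, ?_⟩
  · rw [sdiff_self_inter]
    exact hX.countable_diff_condensationPoints hF hinj
  · exact (Topology.IsEmbedding.inclusion
      (closure_minimal inter_subset_right hKc)).metrizableSpace

theorem cocountable_subset_with_metrizable_closure {X : Type*} [TopologicalSpace X]
    [CompactSpace X] [T2Space X] (hX : HasSmallDiagonal X)
    (A : Set X) (hA : ¬ A.Countable)
    (hK : TopologicalSpace.MetrizableSpace
      {x : X // ∀ U : Set X, IsOpen U → x ∈ U → ¬ (U ∩ A).Countable}) :
    ∃ B ⊆ A, (A \ B).Countable ∧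
      TopologicalSpace.MetrizableSpace (closure B) :=
  cocountable_subset_with_metrizable_closure_general hX A hK
end

section
/- Let X be a compact Hausdorff space, let x ∈ X, and let F be a countable family of closed G_δ subsets of X that is a local π-net at x. Then x has a countable local π-base in X. -/
/-!
A closed `Gδ` set `s = ⋂ Wₙ` of a compact Hausdorff space has a countable neighbourhood base:
shrinking each `Wₙ` to an open `Vₙ ⊇ s` with `closure Vₙ ⊆ Wₙ` gives `⋂ closure Vₙ = s`, and by
compactness every open `U ⊇ s` then contains a finite intersection of the `Vₙ`. The interiors of
the members of these bases, over the countably many `s ∈ F`, are nonempty because they contain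
`s`, and they form a local π-base at `x` because `F` is a local π-net there.
-/

open Set Filter Topology

section

variable {X : Type*} [TopologicalSpace X]

theorem IsGδ.exists_isOpen_iInter_closure_eq [RegularSpace X] {s : Set X} (hs : IsGδ s)
    (hsc : IsCompact s) :
    ∃ V : ℕ → Set X, (∀ n, IsOpen (V n) ∧ s ⊆ V n) ∧ ⋂ n, closure (V n) = s := by
  obtain ⟨W, hWo, rfl⟩ := hs.eq_iInter_nat
  choose V hVo hsV hVW using fun n =>
    hsc.exists_isOpen_closure_subset ((hWo n).mem_nhdsSet.2 (iInter_subset W n))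
  refine ⟨V, fun n => ⟨hVo n, hsV n⟩, Subset.antisymm (iInter_mono hVW) ?_⟩
  exact subset_iInter fun n => (hsV n).trans subset_closure

theorem nhdsSet_eq_iInf_principal_of_iInter_closure_subset [CompactSpace X] {ι : Type*}
    {s : Set X} {V : ι → Set X} (hV : ∀ i, IsOpen (V i) ∧ s ⊆ V i)
    (hVs : ⋂ i, closure (V i) ⊆ s) : 𝓝ˢ s = ⨅ i, 𝓟 (V i) := by
  refine le_antisymm (le_iInf fun i => le_principal_iff.2 ?_) fun U hU => ?_
  · exact (hV i).1.mem_nhdsSet.2 (hV i).2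
  have hsU : s ⊆ interior U := subset_interior_iff_mem_nhdsSet.2 hU
  obtain ⟨t, ht⟩ := isOpen_interior.isClosed_compl.isCompact.elim_finite_subfamily_closed
    (fun i => closure (V i)) (fun _ => isClosed_closure)
    (disjoint_compl_left.mono_right (hVs.trans hsU)).eq_bot
  have htU : ⋂ i ∈ t, V i ⊆ interior U := fun y hy => by_contra fun hyU =>
    ht.subset ⟨hyU, mem_iInter₂.2 fun i hi => subset_closure (mem_iInter₂.1 hy i hi)⟩
  exact mem_of_superset ((biInter_finset_mem t).2 fun i _ => mem_iInf_of_mem i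
    (mem_principal_self _)) (htU.trans interior_subset)

theorem IsClosed.isCountablyGenerated_nhdsSet_of_isGδ [CompactSpace X] [RegularSpace X]
    {s : Set X} (hsc : IsClosed s) (hs : IsGδ s) : (𝓝ˢ s).IsCountablyGenerated := by
  obtain ⟨V, hV, hVs⟩ := hs.exists_isOpen_iInter_closure_eq hsc.isCompact
  exact isCountablyGenerated_of_seq
    ⟨V, nhdsSet_eq_iInf_principal_of_iInter_closure_subset hV hVs.subset⟩

end

theorem countable_local_pi_base_of_Gdelta_pi_net {X : Type*} [TopologicalSpace X]
    [CompactSpace X] [T2Space X] (x : X) (F : Set (Set X))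
    (hcount : F.Countable)
    (hF : ∀ s ∈ F, IsClosed s ∧ IsGδ s ∧ s.Nonempty)
    (hnet : ∀ U : Set X, IsOpen U → x ∈ U → ∃ s ∈ F, s ⊆ U) :
    ∃ B : Set (Set X), B.Countable ∧ (∀ b ∈ B, IsOpen b ∧ b.Nonempty) ∧
      ∀ U : Set X, IsOpen U → x ∈ U → ∃ b ∈ B, b ⊆ U := by
  have := fun s : F => (hF s s.2).1.isCountablyGenerated_nhdsSet_of_isGδ (hF s s.2).2.1
  choose t ht using fun s : F => (𝓝ˢ (s : Set X)).exists_antitone_basis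
  have hst (s : F) (n : ℕ) : (s : Set X) ⊆ interior (t s n) :=
    subset_interior_iff_mem_nhdsSet.2 ((ht s).mem n)
  have := hcount.to_subtype
  refine ⟨⋃ s : F, range fun n => interior (t s n), countable_iUnion fun s => countable_range _,
    ?_, fun U hU hxU => ?_⟩
  · simp only [mem_iUnion, mem_range]
    rintro _ ⟨s, n, rfl⟩
    exact ⟨isOpen_interior, (hF s s.2).2.2.mono (hst s n)⟩
  · obtain ⟨s, hsF, hsU⟩ := hnet U hU hxU
    obtain ⟨n, -, hn⟩ := (ht ⟨s, hsF⟩).toHasBasis.mem_iff.1 (hU.mem_nhdsSet.2 hsU)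
    exact ⟨_, mem_iUnion.2 ⟨⟨s, hsF⟩, mem_range_self n⟩, interior_subset.trans hn⟩
end

section
/- The Continuum Hypothesis implies that there exists a Luzin set of reals of cardinality ω₁. -/
/-!
Under CH the closed nowhere dense subsets of `ℝ` can be listed as `(F α)_{α < ω₁}`. By the Baire
category theorem there is a point `x α` outside the countable union `⋃ β ≤ α, F β`. A nowhere
dense set lies in some `F β`, which contains `x α` only for `α < β`, so it meets `{x α}` in a
countable set. Every point lies in some `F β` as well, so each value is taken only countably often
and `{x α}` is uncountable.
-/

open Set Cardinal TopologicalSpace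

universe u

theorem mk_isClosed_le_continuum {X : Type*} [TopologicalSpace X] [SecondCountableTopology X] :
    #{s : Set X // IsClosed s} ≤ 𝔠 := by
  set B := countableBasis X
  have hinj : Function.Injective fun s : {s : Set X // IsClosed s} => {U : B | U.1 ⊆ s.1ᶜ} := by
    intro s t hst
    refine Subtype.ext <| compl_injective <| (isBasis_countableBasis X).eq_of_forall_subset_iff
      s.2.isOpen_compl t.2.isOpen_compl fun U hU => ?_
    exact Set.ext_iff.1 hst ⟨U, hU⟩
  calc #{s : Set X // IsClosed s} ≤ #(Set B) := mk_le_of_injective hinj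
    _ = 2 ^ #B := mk_set
    _ ≤ 2 ^ ℵ₀ := power_le_power_left two_ne_zero (countable_countableBasis X).le_aleph0
    _ = 𝔠 := two_power_aleph0

theorem exists_isNowhereDense_cover_of_continuum_le {X ι : Type u} [TopologicalSpace X]
    [SecondCountableTopology X] [Nonempty ι] (h : 𝔠 ≤ #ι) :
    ∃ F : ι → Set X, (∀ i, IsNowhereDense (F i)) ∧ ∀ N, IsNowhereDense N → ∃ i, N ⊆ F i := by
  set T := {s : Set X // IsClosed s ∧ IsNowhereDense s}
  have : Nonempty T := ⟨⟨∅, isClosed_empty, isNowhereDense_empty⟩⟩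
  obtain ⟨e⟩ : #T ≤ #ι :=
    (mk_subtype_mono fun _ hs => hs.1).trans (mk_isClosed_le_continuum.trans h)
  refine ⟨fun i => (Function.invFun e i).1, fun i => (Function.invFun e i).2.2, fun N hN => ?_⟩
  obtain ⟨C, hNC, hCN, hC⟩ := hN.subset_of_closed_isNowhereDense
  obtain ⟨i, hi⟩ := Function.invFun_surjective e.injective ⟨C, hC, hCN⟩
  exact ⟨i, by simpa only [hi] using hNC⟩

theorem exists_notMem_biUnion_of_isNowhereDense {X ι : Type*} [TopologicalSpace X] [BaireSpace X]
    [Nonempty X] {s : Set ι} (hs : s.Countable) {F : ι → Set X}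
    (hF : ∀ i ∈ s, IsNowhereDense (F i)) : ∃ x, x ∉ ⋃ i ∈ s, F i := by
  by_contra! h
  exact not_isMeagre_of_isOpen isOpen_univ univ_nonempty <|
    (isMeagre_biUnion hs fun i hi => (hF i hi).isMeagre).mono fun x _ => h x

theorem exists_luzin_of_isNowhereDense_cover {X ι : Type*} [TopologicalSpace X] [BaireSpace X]
    [Nonempty X] [LinearOrder ι] [Uncountable ι] (hι : ∀ i : ι, (Iio i).Countable)
    {F : ι → Set X} (hF : ∀ i, IsNowhereDense (F i))
    (hcover : ∀ N, IsNowhereDense N → ∃ i, N ⊆ F i)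
    (hsingleton : ∀ x : X, IsNowhereDense {x}) :
    ∃ L : Set X, ¬ L.Countable ∧ ∀ N, IsNowhereDense N → (L ∩ N).Countable := by
  obtain ⟨g, hg⟩ : ∃ g : ι → X, ∀ i, ∀ j ≤ i, g i ∉ F j := by
    choose g hg using fun i => exists_notMem_biUnion_of_isNowhereDense (s := Iic i)
      (Iio_insert (a := i) ▸ (hι i).insert i) fun j _ => hF j
    exact ⟨g, fun i j hji hgj => hg i (mem_biUnion hji hgj)⟩
  have hlt : ∀ i j, g i ∈ F j → i < j := fun i j h => lt_of_not_ge fun hji => hg i j hji h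
  refine ⟨range g, fun hL => ?_, fun N hN => ?_⟩
  · choose γ hγ using fun x => hcover {x} (hsingleton x)
    refine not_countable_univ <| (hL.biUnion fun x _ => hι (γ x)).mono fun i _ => ?_
    exact mem_biUnion (mem_range_self i) (hlt i _ (hγ (g i) rfl))
  · obtain ⟨j, hj⟩ := hcover N hN
    refine ((hι j).image g).mono ?_
    rintro _ ⟨⟨i, rfl⟩, hiN⟩
    exact ⟨i, hlt i j (hj hiN), rfl⟩

theorem countable_Iio_toType_ord_aleph_one (i : (ℵ₁ : Cardinal.{u}).ord.ToType) :
    (Iio i).Countable :=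
  le_aleph0_iff_set_countable.1 <| lt_aleph_one_iff.1 <| (mk_Iio_lt i (by simp)).trans_eq (by simp)

/-- CH implies there is a Luzin set of reals of cardinality ω₁. -/
theorem exists_luzin_of_CH (hCH : Cardinal.continuum = Cardinal.aleph 1) :
    ∃ L : Set ℝ, #L = Cardinal.aleph 1 ∧ ¬ L.Countable ∧
      ∀ N : Set ℝ, IsNowhereDense N → (L ∩ N).Countable := by
  have hCH₀ : (𝔠 : Cardinal.{0}) = ℵ₁ := lift_inj.1 (by simpa using hCH)
  set ι := (ℵ₁ : Cardinal.{0}).ord.ToType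
  have hι : #ι = ℵ₁ := mk_ord_toType _
  have : Uncountable ι := aleph0_lt_mk_iff.1 (hι ▸ aleph0_lt_aleph_one)
  obtain ⟨F, hF, hcover⟩ :=
    exists_isNowhereDense_cover_of_continuum_le (X := ℝ) (hCH₀.trans hι.symm).le
  obtain ⟨L, hL, hLN⟩ := exists_luzin_of_isNowhereDense_cover
    countable_Iio_toType_ord_aleph_one hF hcover fun x => by simp [IsNowhereDense]
  refine ⟨L, le_antisymm ?_ ?_, hL, hLN⟩
  · exact (mk_set_le L).trans (mk_real.trans hCH₀).le
  · exact aleph_one_le_iff.2 <| lt_of_not_ge <| mt le_aleph0_iff_set_countable.1 hL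
end

section
/- Let S be a countable set and let 𝒳 = {(a_α, b_α) : α < ω₁} be a family of pairs of disjoint subsets of S such that for any two distinct α, β < ω₁, the set (a_α ∩ b_β) ∪ (a_β ∩ b_α) is nonempty. Then for every uncountable A ⊆ ω₁, the family {(a_α, b_α) : α ∈ A} is not separated, i.e., there is no single set Y ⊆ S with a_α \ Y and b_α ∩ Y finite for all α ∈ A. -/
/-!
If `Y` separates the pairs indexed by `A`, then `α ↦ (a α \ Y, b α ∩ Y)` sends `A` to pairs of
finite subsets of the countable set `S`, of which there are only countably many. This map is
injective on `A`: if two crossing pairs had the same traces, a point of `a α ∩ b β` would lie in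
`b α` (if it is in `Y`) or in `a β` (if it is not), contradicting disjointness. So `A` is countable.
-/

open Set

theorem Set.disjoint_of_diff_eq_of_inter_eq {S : Type*} {a b a' b' Y : Set S}
    (hab : Disjoint a b) (hab' : Disjoint a' b') (ha : a \ Y = a' \ Y) (hb : b ∩ Y = b' ∩ Y) :
    Disjoint a b' := by
  refine Set.disjoint_left.mpr fun x hxa hxb' => ?_
  by_cases hxY : x ∈ Y
  · have hxb : x ∈ b ∩ Y := hb ▸ ⟨hxb', hxY⟩
    exact Set.disjoint_left.mp hab hxa hxb.1
  · have hxa' : x ∈ a' \ Y := ha ▸ ⟨hxa, hxY⟩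
    exact Set.disjoint_left.mp hab' hxa'.1 hxb'

theorem Set.Countable.of_separated_of_crossing {ι S : Type*} [Countable S] {a b : ι → Set S}
    (hdisj : ∀ i, Disjoint (a i) (b i)) {A : Set ι}
    (hcross : ∀ i ∈ A, ∀ j ∈ A, i ≠ j → ((a i ∩ b j) ∪ (a j ∩ b i)).Nonempty)
    {Y : Set S} (hY : ∀ i ∈ A, (a i \ Y).Finite ∧ (b i ∩ Y).Finite) :
    A.Countable := by
  let traces : ι → Set S × Set S := fun i => (a i \ Y, b i ∩ Y)
  have hmaps : MapsTo traces A ({s | s.Finite} ×ˢ {s | s.Finite}) := fun i hi => hY i hi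
  have hinj : InjOn traces A := by
    intro i hi j hj hij
    by_contra hne
    obtain ⟨ha, hb⟩ := Prod.ext_iff.mp hij
    have hij' := disjoint_of_diff_eq_of_inter_eq (hdisj i) (hdisj j) ha hb
    have hji' := disjoint_of_diff_eq_of_inter_eq (hdisj j) (hdisj i) ha.symm hb.symm
    exact (hcross i hi j hj hne).ne_empty (by rw [hij'.inter_eq, hji'.inter_eq, union_empty])
  exact hmaps.countable_of_injOn hinj (Countable.ofPred_finite.prod Countable.ofPred_finite)

theorem not_separated_of_crossing {S : Type*} [Countable S]
    (a b : ω₁ → Set S) (hdisj : ∀ α, Disjoint (a α) (b α))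
    (hcross : ∀ α β : ω₁, α ≠ β → ((a α ∩ b β) ∪ (a β ∩ b α)).Nonempty) :
    ∀ A : Set ω₁, ¬ A.Countable →
      ¬ ∃ Y : Set S, ∀ α ∈ A, (a α \ Y).Finite ∧ (b α ∩ Y).Finite := by
  rintro A hA ⟨Y, hY⟩
  exact hA (.of_separated_of_crossing hdisj (fun α _ β _ => hcross α β) hY)
end
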